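/- arXiv:math/0003159 — 3 statements merged into one kernel-verified Lean document; each statement's English description precedes it below -/
import Mathlib

section
/- Let n ≥ 1, i ≥ 0 and m > 0. The subspace of V^{⊗(i+mn)} ⊗ (V*)^{⊗i} consisting of the vectors w with g·w = det(g)^m · w for all g ∈ GL(n,ℂ) equals the sum, over all permutations σ of the i+mn tensor factors of V, of the images Φ_σ((V^{⊗i}⊗(V*)^{⊗i})^{GL(n,ℂ)}). -/
open scoped BigOperators

noncomputable section

namespace TensorCov

abbrev TSp (n k l : ℕ) : Type := ((Fin k → Fin n) × (Fin l → Fin n)) → ℂ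

def tact {n : ℕ} (k l : ℕ) (g : (Matrix (Fin n) (Fin n) ℂ)ˣ) (xx : TSp n k l) :
    TSp n k l :=
  fun ab => ∑ p : (Fin k → Fin n) × (Fin l → Fin n),
    ((∏ t, (g : Matrix (Fin n) (Fin n) ℂ) (ab.1 t) (p.1 t)) *
      (∏ t, (((g⁻¹ : (Matrix (Fin n) (Fin n) ℂ)ˣ) : Matrix (Fin n) (Fin n) ℂ)) (p.2 t) (ab.2 t)))
    * xx p

/-- The coordinates of `o = ∑_{τ ∈ Sₙ} sgn(τ) e_{τ(1)} ⊗ ⋯ ⊗ e_{τ(n)} ∈ V^{⊗n}`. -/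
def oVec (n : ℕ) : (Fin n → Fin n) → ℂ :=
  fun a => if h : Function.Bijective a then
    ((Equiv.Perm.sign (Equiv.ofBijective a h) : ℤ) : ℂ) else 0

/-- The arrangement `Fin (m·n) ⊕ Fin i ≃ Fin (i + m·n)` used to place the `m`
copies of `o` in front of the remaining `i` tensor factors. -/
def arr (i m n : ℕ) : (Fin (m * n) ⊕ Fin i) ≃ Fin (i + m * n) :=
  finSumFinEquiv.trans (finCongr (Nat.add_comm (m * n) i))

/-- `Φ_σ : (V^{⊗i} ⊗ (V*)^{⊗i})^{GL(n,ℂ)} → V^{⊗(i+mn)} ⊗ (V*)^{⊗i}`,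
`Φ_σ(t ⊗ s) = (σ·(o^{⊗m} ⊗ t)) ⊗ s`, written in coordinates (and defined on the
whole space). -/
def PhiSigma (n i m : ℕ) (σ : Equiv.Perm (Fin (i + m * n))) (x : TSp n i i) :
    TSp n (i + m * n) i :=
  fun ab =>
    (∏ t : Fin m,
        oVec n (fun q => ab.1 (σ (arr i m n (Sum.inl (finProdFinEquiv (t, q))))))) *
      x (fun h => ab.1 (σ (arr i m n (Sum.inr h))), ab.2)

end TensorCov

end

/-!
The inclusion `⊇` is the computation `g^{⊗n} o = det g • o`. For `⊆`, tensor a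
`det^m`-eigenvector `w` with `m` copies of the dual of `o`: the result `w̃ ∈ End(V^{⊗N})`,
`N = i + mn`, is `GL`-invariant, i.e. commutes with every `g^{⊗N}`, hence (Zariski density of
`GL`) with every `X^{⊗N}`. By polarization the `X^{⊗N}` span the commutant of the permutations of
the factors, so by the double commutant theorem (Maschke and Jacobson density) `w̃` is a linear
combination of permutation operators. Contracting the dual slots of `w̃` with `o^{⊗m}` gives back
`(n!)^m • w`, and turns the permutation operator of `σ` into `Φ_σ` of the identity tensor.
-/

namespace Fintype

open Finset

theorem sum_superset_neg_one_pow_card_compl {α : Type*} [Fintype α] [DecidableEq α]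
    (F : Finset α) :
    ∑ S : Finset α, (if F ⊆ S then (-1 : ℤ) ^ #Sᶜ else 0) = if F = univ then 1 else 0 := by
  rw [← Equiv.sum_comp compl_involutive.toPerm]
  simp only [Function.Involutive.coe_toPerm, compl_compl, subset_compl_comm (s := F)]
  rw [← sum_filter]
  have : ({U | U ⊆ Fᶜ} : Finset (Finset α)) = Fᶜ.powerset := by ext; simp
  simp_rw [this, sum_powerset_neg_one_pow_card, compl_eq_empty_iff]

theorem sum_perm_eq_sum_surjective {α M : Type*} [Fintype α] [DecidableEq α]
    [AddCommMonoid M] (g : (α → α) → M) :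
    ∑ π : Equiv.Perm α, g π = ∑ f : α → α, if f.Surjective then g f else 0 := by
  rw [← sum_filter]
  refine sum_nbij' (⇑) (fun f => if hf : f.Surjective then
    Equiv.ofBijective f (Finite.surjective_iff_bijective.mp hf) else 1) ?_ ?_ ?_ ?_ ?_ <;>
    intro f hf
  · simpa using f.surjective
  · simp
  · simp [f.surjective]
  · simp only [mem_filter] at hf
    simp [hf.2]
  · rfl

end Fintype

namespace Representation

open Module

theorem asAlgebraHom_mem_span_range {k G V : Type*} [CommSemiring k] [Monoid G]
    [AddCommMonoid V] [Module k V] (ρ : Representation k G V) (r : MonoidAlgebra k G) :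
    ρ.asAlgebraHom r ∈ Submodule.span k (Set.range ρ) := by
  induction r using MonoidAlgebra.induction_on with
  | of g => exact Submodule.subset_span ⟨g, by simp⟩
  | add r s hr hs => simpa using Submodule.add_mem _ hr hs
  | smul c r hr => simpa using Submodule.smul_mem _ c hr

/-- The double commutant theorem: `k[G]` is semisimple (Maschke), so the Jacobson density
theorem applies to the `k[G]`-module `V`. -/
theorem mem_span_range_of_commute {k G V : Type*} [Field k] [Group G] [Finite G]
    [NeZero (Nat.card G : k)] [AddCommGroup V] [Module k V] [Module.Finite k V]
    (ρ : Representation k G V) (f : End k V)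
    (hf : ∀ T : End k V, (∀ g, Commute (ρ g) T) → Commute f T) :
    f ∈ Submodule.span k (Set.range ρ) := by
  let A := MonoidAlgebra k G
  let M := ρ.asModule
  let E := ρ.asModuleEquiv
  have : Module.Finite (End A M) M := Module.Finite.of_restrictScalars_finite k (End A M) M
  let F : End (End A M) M :=
    { toFun := fun v => E.symm (f (E v))
      map_add' := fun v w => by simp
      map_smul' := fun T v => by
        have hT := hf (E.conj (T.restrictScalars k)) fun g => by
          ext v
          change ρ g (E (T (E.symm v))) = E (T (E.symm (ρ g v)))
          rw [asModuleEquiv_symm_map_rho, map_smul, asModuleEquiv_map_smul, asAlgebraHom_of]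
        simpa using congr(E.symm ($hT.eq (E v))) }
  obtain ⟨r, hr⟩ := Module.Finite.toModuleEnd_moduleEnd_surjective F
  have hfr : f = ρ.asAlgebraHom r := by
    ext v
    have := congr(E ($hr (E.symm v)))
    change E (r • E.symm v) = f v at this
    rw [asModuleEquiv_map_smul, LinearEquiv.apply_symm_apply] at this
    exact this.symm
  exact hfr ▸ ρ.asAlgebraHom_mem_span_range r

def permuteFactors (R ι κ : Type*) [CommSemiring R] :
    Representation R (Equiv.Perm κ) ((κ → ι) → R) where
  toFun π := LinearMap.funLeft R R (· ∘ π)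
  map_one' := rfl
  map_mul' _ _ := rfl

section permuteFactors

variable {R ι κ : Type*} [CommSemiring R]

@[simp]
theorem permuteFactors_apply (π : Equiv.Perm κ) (v : (κ → ι) → R) (a : κ → ι) :
    permuteFactors R ι κ π v a = v (a ∘ π) := rfl

variable [Fintype κ] [DecidableEq ι]

theorem permuteFactors_single (π : Equiv.Perm κ) (b : κ → ι) (r : R) :
    permuteFactors R ι κ π (Pi.single (b ∘ π) r) = Pi.single b r := by
  ext a
  simp [Pi.single_apply, π.surjective.injective_comp_right.eq_iff]

variable [Fintype ι] [DecidableEq κ]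

theorem toMatrix'_permuteFactors (π : Equiv.Perm κ) :
    LinearMap.toMatrix' (permuteFactors R ι κ π) =
      (1 : Matrix (κ → ι) (κ → ι) R).submatrix (· ∘ π) id := by
  ext a b
  simp [LinearMap.toMatrix'_apply, Pi.single_apply, Matrix.one_apply]

theorem toMatrix'_apply_comp_of_commute_permuteFactors {T : End R ((κ → ι) → R)}
    (hT : ∀ π, Commute (permuteFactors R ι κ π) T) (π : Equiv.Perm κ) (a b : κ → ι) :
    LinearMap.toMatrix' T (a ∘ π) (b ∘ π) = LinearMap.toMatrix' T a b := by
  simp only [LinearMap.toMatrix'_apply]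
  change (permuteFactors R ι κ π * T) (Pi.single (b ∘ π) 1) a = _
  rw [(hT π).eq, End.mul_apply, permuteFactors_single]

end permuteFactors

end Representation

namespace Matrix

open Finset
open scoped Kronecker

variable {R ι κ : Type*}

theorem one_kronecker_submatrix_punitProd {α β : Type*} [MulZeroOneClass R] (A : Matrix α β R) :
    ((1 : Matrix Unit Unit R) ⊗ₖ A).submatrix (Equiv.punitProd α).symm
      (Equiv.punitProd β).symm = A := by
  ext
  simp

def tensorPow (κ : Type*) [CommSemiring R] [Fintype κ] (X : Matrix ι ι R) :
    Matrix (κ → ι) (κ → ι) R :=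
  of fun a b => ∏ t, X (a t) (b t)

variable [Fintype κ]

section CommSemiring

variable [CommSemiring R]

@[simp]
theorem tensorPow_apply (X : Matrix ι ι R) (a b : κ → ι) :
    tensorPow κ X a b = ∏ t, X (a t) (b t) := rfl

theorem tensorPow_transpose (X : Matrix ι ι R) : (tensorPow κ X)ᵀ = tensorPow κ Xᵀ := rfl

theorem tensorPow_map {S : Type*} [CommSemiring S] (f : R →+* S) (X : Matrix ι ι R) :
    (tensorPow κ X).map f = tensorPow κ (X.map f) := by
  ext a b
  simp

theorem tensorPow_one [DecidableEq ι] : tensorPow κ (1 : Matrix ι ι R) = 1 := by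
  ext a b
  simp only [tensorPow_apply, one_apply, prod_ite_zero, funext_iff]
  congr! 1 <;> simp

variable [DecidableEq κ]

theorem tensorPow_mul [Fintype ι] (X Y : Matrix ι ι R) :
    tensorPow κ X * tensorPow κ Y = tensorPow κ (X * Y) := by
  ext a b
  simp only [mul_apply, tensorPow_apply, ← prod_mul_distrib]
  exact (Fintype.prod_sum fun t c => X (a t) c * Y c (b t)).symm

theorem tensorPow_mul_tensorPow_inv [Fintype ι] [DecidableEq ι] (g : (Matrix ι ι R)ˣ) :
    tensorPow κ (g : Matrix ι ι R) * tensorPow κ (↑g⁻¹ : Matrix ι ι R) = 1 := by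
  rw [tensorPow_mul, Units.mul_inv, tensorPow_one]

theorem tensorPow_inv_mul_tensorPow [Fintype ι] [DecidableEq ι] (g : (Matrix ι ι R)ˣ) :
    tensorPow κ (↑g⁻¹ : Matrix ι ι R) * tensorPow κ (g : Matrix ι ι R) = 1 := by
  rw [tensorPow_mul, Units.inv_mul, tensorPow_one]

theorem tensorPow_mulVec_prod [Fintype ι] (X : Matrix ι ι R) (u : ι → R) :
    tensorPow κ X *ᵥ (fun v => ∏ t, u (v t)) = fun a => ∏ t, (X *ᵥ u) (a t) := by
  ext a
  simp only [mulVec, dotProduct, tensorPow_apply, ← prod_mul_distrib]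
  exact (Fintype.prod_sum fun t c => X (a t) c * u c).symm

theorem tensorPow_sum_single [DecidableEq ι] (a b : κ → ι) (S : Finset κ) :
    tensorPow κ (∑ t ∈ S, single (a t) (b t) (1 : R)) =
      ∑ f : κ → κ, if ∀ s, f s ∈ S then single (a ∘ f) (b ∘ f) 1 else 0 := by
  ext c d
  simp only [tensorPow_apply, sum_apply, prod_univ_sum, single_apply, prod_const_one,
    apply_ite (fun M : Matrix _ _ R => M c d), zero_apply, ← sum_filter]
  congr 1
  ext f
  simp [funext_iff, forall_and]

end CommSemiring

variable [DecidableEq ι] [DecidableEq κ]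

/-- Polarization: `k! x₁ ⋯ xₖ = ∑_{S ⊆ [k]} (-1)^{k - |S|} (∑_{t ∈ S} xₜ)^k` for the
elementary matrices `xₜ = E_{a t, b t}`. -/
theorem sum_perm_single_mem_span_range_tensorPow [CommRing R] (a b : κ → ι) :
    ∑ π : Equiv.Perm κ, single (a ∘ π) (b ∘ π) (1 : R) ∈
      Submodule.span R (Set.range (tensorPow κ)) := by
  have key : ∑ π : Equiv.Perm κ, single (a ∘ π) (b ∘ π) (1 : R) =
      ∑ S : Finset κ,
        ((-1 : ℤ) ^ #Sᶜ) • tensorPow κ (∑ t ∈ S, single (a t) (b t) (1 : R)) := by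
    rw [Fintype.sum_perm_eq_sum_surjective (fun f => single (a ∘ f) (b ∘ f) (1 : R))]
    simp_rw [tensorPow_sum_single, smul_sum]
    rw [sum_comm]
    refine sum_congr rfl fun f _ => ?_
    have h := congrArg (· • single (a ∘ f) (b ∘ f) (1 : R))
      (Fintype.sum_superset_neg_one_pow_card_compl (univ.image f))
    simp only [sum_smul, ite_smul, zero_smul, one_smul] at h
    simpa [image_subset_iff, ← coe_eq_univ, Set.range_eq_univ] using h.symm
  rw [key]
  exact Submodule.sum_mem _ fun S _ =>
    Submodule.smul_of_tower_mem _ _ (Submodule.subset_span ⟨_, rfl⟩)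

theorem mem_span_range_tensorPow [Field R] [CharZero R] [Fintype ι]
    {T : Matrix (κ → ι) (κ → ι) R}
    (hT : ∀ (π : Equiv.Perm κ) a b, T (a ∘ π) (b ∘ π) = T a b) :
    T ∈ Submodule.span R (Set.range (tensorPow κ)) := by
  have hπ (π : Equiv.Perm κ) : ∑ a, ∑ b, single (a ∘ π) (b ∘ π) (T a b) = T := by
    let e : (κ → ι) ≃ (κ → ι) := π.symm.arrowCongr (Equiv.refl ι)
    conv_rhs => rw [matrix_eq_sum_single T]
    exact Fintype.sum_equiv e _ _ fun a => Fintype.sum_equiv e _ _ fun b => by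
      change _ = single (a ∘ π) (b ∘ π) (T (a ∘ π) (b ∘ π))
      rw [hT]
  have key : (Fintype.card (Equiv.Perm κ) : R) • T =
      ∑ a, ∑ b, T a b • ∑ π : Equiv.Perm κ, single (a ∘ π) (b ∘ π) (1 : R) := by
    calc (Fintype.card (Equiv.Perm κ) : R) • T
        = ∑ π : Equiv.Perm κ, ∑ a, ∑ b, single (a ∘ π) (b ∘ π) (T a b) := by
          simp [hπ, Nat.cast_smul_eq_nsmul]
      _ = _ := by
          simp_rw [smul_sum, smul_single, smul_eq_mul, mul_one]
          rw [sum_comm]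
          exact sum_congr rfl fun a _ => sum_comm
  have hcard : (Fintype.card (Equiv.Perm κ) : R) ≠ 0 := Nat.cast_ne_zero.mpr Fintype.card_ne_zero
  rw [← inv_smul_smul₀ hcard T, key]
  exact Submodule.smul_mem _ _ (Submodule.sum_mem _ fun a _ => Submodule.sum_mem _ fun b _ =>
    Submodule.smul_mem _ _ (sum_perm_single_mem_span_range_tensorPow a b))

open Polynomial in
/-- Zariski density of `GL`: an entry of `[(X + z)^{⊗κ}, M]` is a polynomial in `z`, and its
product with `det (X + z)` vanishes at every `z`. -/
theorem commute_tensorPow_of_forall_units [Field R] [Infinite R] [Fintype ι]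
    {M : Matrix (κ → ι) (κ → ι) R}
    (hM : ∀ g : (Matrix ι ι R)ˣ, Commute (tensorPow κ (g : Matrix ι ι R)) M)
    (X : Matrix ι ι R) : Commute (tensorPow κ X) M := by
  let Xt : Matrix ι ι R[X] := X.map C + scalar ι Polynomial.X
  have hXt : ∀ z, Xt.map (evalRingHom z) = X + scalar ι z := fun z => by
    ext u v
    rcases eq_or_ne u v with rfl | huv <;> simp [Xt, *]
  have hdet : Xt.det ≠ 0 := by
    have : Xt = charmatrix (-X) := by
      ext u v
      rcases eq_or_ne u v with rfl | huv <;> simp [Xt, *]; ring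
    rw [this]
    exact (charpoly_monic (-X)).ne_zero
  ext a b
  let p : R[X] := (tensorPow κ Xt * M.map C - M.map C * tensorPow κ Xt) a b
  have hp : ∀ z, p.eval z =
      (tensorPow κ (X + scalar ι z) * M - M * tensorPow κ (X + scalar ι z)) a b := fun z => by
    change (evalRingHom z).mapMatrix
      (tensorPow κ Xt * M.map C - M.map C * tensorPow κ Xt) a b = _
    simp only [map_sub, map_mul, RingHom.mapMatrix_apply, tensorPow_map, hXt, map_map]
    simp [Function.comp_def]
  have hpdet : p * Xt.det = 0 := Polynomial.funext fun z => by
    rw [eval_mul, eval_zero, hp, ← coe_evalRingHom, RingHom.map_det, RingHom.mapMatrix_apply,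
      hXt]
    by_cases hz : (X + scalar ι z).det = 0
    · rw [hz, mul_zero]
    · obtain ⟨g, hg⟩ := (isUnit_iff_isUnit_det _).mpr (isUnit_iff_ne_zero.mpr hz)
      simp only [← hg, (hM g).eq, sub_self, zero_apply, zero_mul]
  have := congr(eval 0 $((mul_eq_zero.mp hpdet).resolve_right hdet))
  rwa [hp, map_zero, add_zero, eval_zero, sub_apply, sub_eq_zero] at this

/-- One half of Schur–Weyl duality. -/
theorem mem_span_permuteFactors_of_commute_tensorPow [Field R] [CharZero R] [Fintype ι]
    {M : Matrix (κ → ι) (κ → ι) R}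
    (hM : ∀ X : Matrix ι ι R, Commute (tensorPow κ X) M) :
    M ∈ Submodule.span R (Set.range fun π : Equiv.Perm κ =>
      (1 : Matrix (κ → ι) (κ → ι) R).submatrix (· ∘ π) id) := by
  have : NeZero (Nat.card (Equiv.Perm κ) : R) := ⟨Nat.cast_ne_zero.mpr Nat.card_pos.ne'⟩
  have hρ := (Representation.permuteFactors R ι κ).mem_span_range_of_commute (toLin' M)
    fun T hT => by
      have hT' : LinearMap.toMatrix' T ∈ Subalgebra.toSubmodule (Subalgebra.centralizer R {M}) :=
        Submodule.span_le.mpr (by rintro _ ⟨X, rfl⟩ _ rfl; exact (hM X).eq.symm)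
          (mem_span_range_tensorPow
            (Representation.toMatrix'_apply_comp_of_commute_permuteFactors hT))
      have hc : Commute M (LinearMap.toMatrix' T) := hT' M rfl
      rw [← Matrix.toLin'_toMatrix' T]
      exact hc.map toLinAlgEquiv'
  have := Submodule.apply_mem_span_image_of_mem_span LinearMap.toMatrix'.toLinearMap hρ
  rw [← Set.range_comp] at this
  simpa only [LinearEquiv.coe_coe, LinearMap.toMatrix'_toLin', Function.comp_def,
    Representation.toMatrix'_permuteFactors] using this

end Matrix

noncomputable section

namespace TensorCov

open Matrix Finset
open scoped Kronecker

variable {n : ℕ}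

def mat (n k l : ℕ) : TSp n k l ≃ₗ[ℂ] Matrix (Fin k → Fin n) (Fin l → Fin n) ℂ :=
  LinearEquiv.curry ℂ ℂ _ _

def tactLin (k l : ℕ) (g : (Matrix (Fin n) (Fin n) ℂ)ˣ) : Module.End ℂ (TSp n k l) :=
  toLin' (tensorPow (Fin k) g.val ⊗ₖ (tensorPow (Fin l) (g⁻¹).val)ᵀ)

theorem tactLin_apply {k l : ℕ} (g : (Matrix (Fin n) (Fin n) ℂ)ˣ) (Y : TSp n k l) :
    tactLin k l g Y = tact k l g Y := rfl

theorem setOf_tact_eq_smul (k l : ℕ) (c : (Matrix (Fin n) (Fin n) ℂ)ˣ → ℂ) :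
    {w : TSp n k l | ∀ g, tact k l g w = c g • w} =
      ↑(⨅ g, Module.End.eigenspace (tactLin k l g) (c g)) := by
  ext w
  simp [tactLin_apply]

theorem mat_tact {k l : ℕ} (g : (Matrix (Fin n) (Fin n) ℂ)ˣ) (Y : TSp n k l) :
    mat n k l (tact k l g Y) =
      tensorPow (Fin k) g.val * mat n k l Y * tensorPow (Fin l) (g⁻¹).val := by
  have := kronecker_mulVec_vec (tensorPow (Fin l) (g⁻¹).val)ᵀ (mat n k l Y)ᵀ
    (tensorPow (Fin k) g.val)
  rw [← transpose_mul, ← transpose_mul, ← Matrix.mul_assoc] at this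
  exact congr(mat n k l $this).trans (by ext; rfl)

theorem oVec_eq_zero {a : Fin n → Fin n} (ha : ¬ a.Surjective) : oVec n a = 0 :=
  dif_neg fun h => ha h.2

theorem oVec_perm (τ : Equiv.Perm (Fin n)) : oVec n τ = Equiv.Perm.sign τ := by
  rw [oVec, dif_pos τ.bijective]
  congr
  exact Equiv.ext fun _ => rfl

theorem sum_mul_oVec (F : (Fin n → Fin n) → ℂ) :
    ∑ c, F c * oVec n c = ∑ τ : Equiv.Perm (Fin n), F τ * Equiv.Perm.sign τ := by
  simp_rw [← oVec_perm, Fintype.sum_perm_eq_sum_surjective fun c => F c * oVec n c]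
  refine sum_congr rfl fun c _ => ?_
  split_ifs with hc
  · rfl
  · rw [oVec_eq_zero hc, mul_zero]

theorem det_submatrix_eq_oVec_mul (a : Fin n → Fin n) (X : Matrix (Fin n) (Fin n) ℂ) :
    (X.submatrix a id).det = oVec n a * X.det := by
  by_cases ha : a.Bijective
  · rw [oVec, dif_pos ha]
    exact det_permute (Equiv.ofBijective a ha) X
  · obtain ⟨p, q, hpq, hne⟩ := Function.not_injective_iff.mp
      fun hi => ha (Finite.injective_iff_bijective.mp hi)
    rw [det_zero_of_row_eq hne (by ext; simp [hpq]), oVec_eq_zero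
      fun hs => ha (Finite.surjective_iff_bijective.mp hs), zero_mul]

theorem tensorPow_mulVec_oVec (X : Matrix (Fin n) (Fin n) ℂ) :
    tensorPow (Fin n) X *ᵥ oVec n = X.det • oVec n := by
  ext a
  rw [mulVec, dotProduct, sum_mul_oVec, Pi.smul_apply, smul_eq_mul, mul_comm,
    ← det_submatrix_eq_oVec_mul, ← det_transpose, det_apply]
  simp [Units.smul_def, zsmul_eq_mul, mul_comm]

theorem oVec_dotProduct_oVec : oVec n ⬝ᵥ oVec n = n.factorial := by
  rw [dotProduct, sum_mul_oVec]
  simp [oVec_perm, ← Int.cast_mul, ← Units.val_mul, Fintype.card_perm]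

def oPow (m n : ℕ) (v : Fin m → Fin n → Fin n) : ℂ := ∏ t, oVec n (v t)

variable {i m : ℕ}

theorem tensorPow_mulVec_oPow (X : Matrix (Fin n) (Fin n) ℂ) :
    tensorPow (Fin m) (tensorPow (Fin n) X) *ᵥ oPow m n = X.det ^ m • oPow m n := by
  unfold oPow
  rw [tensorPow_mulVec_prod, tensorPow_mulVec_oVec]
  ext v
  simp [prod_mul_distrib]

theorem oPow_vecMul_tensorPow (X : Matrix (Fin n) (Fin n) ℂ) :
    oPow m n ᵥ* tensorPow (Fin m) (tensorPow (Fin n) X) = X.det ^ m • oPow m n := by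
  rw [← mulVec_transpose, tensorPow_transpose, tensorPow_transpose, tensorPow_mulVec_oPow,
    det_transpose]

theorem oPow_dotProduct_oPow : oPow m n ⬝ᵥ oPow m n = (n.factorial : ℂ) ^ m := by
  simp only [dotProduct, oPow, ← prod_mul_distrib]
  rw [← Fintype.prod_sum fun _ c => oVec n c * oVec n c]
  simp [← oVec_dotProduct_oVec, dotProduct]

/-- Where `Φ_σ` puts the factors: `(t, q)` is factor `q` of the `t`-th copy of `o`, and `c` is
factor `c` of the invariant. -/
def slot (i m n : ℕ) (σ : Equiv.Perm (Fin (i + m * n))) :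
    (Fin m × Fin n) ⊕ Fin i ≃ Fin (i + m * n) :=
  (Equiv.sumCongr finProdFinEquiv (Equiv.refl _)).trans ((arr i m n).trans σ)

def split (i m n : ℕ) (σ : Equiv.Perm (Fin (i + m * n))) :
    (Fin (i + m * n) → Fin n) ≃ (Fin m → Fin n → Fin n) × (Fin i → Fin n) :=
  ((slot i m n σ).symm.arrowCongr (Equiv.refl _)).trans
    ((Equiv.sumArrowEquivProdArrow _ _ _).trans
      (Equiv.prodCongr (Equiv.curry _ _ _) (Equiv.refl _)))

theorem tensorPow_eq_submatrix_split (σ : Equiv.Perm (Fin (i + m * n)))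
    (X : Matrix (Fin n) (Fin n) ℂ) :
    tensorPow (Fin (i + m * n)) X = (tensorPow (Fin m) (tensorPow (Fin n) X) ⊗ₖ
      tensorPow (Fin i) X).submatrix (split i m n σ) (split i m n σ) := by
  ext a b
  rw [tensorPow_apply, ← (slot i m n σ).prod_comp, Fintype.prod_sum_type, Fintype.prod_prod_type]
  rfl

theorem mat_PhiSigma (σ : Equiv.Perm (Fin (i + m * n))) (x : TSp n i i) :
    mat n _ i (PhiSigma n i m σ x) = (replicateCol Unit (oPow m n) ⊗ₖ mat n i i x).submatrix
      (split i m n σ) (Equiv.punitProd _).symm := rfl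

theorem tact_PhiSigma (σ : Equiv.Perm (Fin (i + m * n))) {x : TSp n i i}
    (hx : ∀ g, tact i i g x = x) (g : (Matrix (Fin n) (Fin n) ℂ)ˣ) :
    tact (i + m * n) i g (PhiSigma n i m σ x) =
      g.val.det ^ m • PhiSigma n i m σ x := by
  apply (mat n _ i).injective
  have hx' := congr(mat n i i $(hx g))
  rw [mat_tact] at hx'
  rw [mat_tact, map_smul, mat_PhiSigma, tensorPow_eq_submatrix_split σ,
    ← one_kronecker_submatrix_punitProd (tensorPow (Fin i) (g⁻¹).val),
    submatrix_mul_equiv, submatrix_mul_equiv, ← mul_kronecker_mul, ← mul_kronecker_mul,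
    Matrix.mul_one, ← replicateCol_mulVec, tensorPow_mulVec_oPow, hx', replicateCol_smul,
    smul_kronecker]
  rfl

/-- The matrix of `w ⊗ (o^*)^{⊗m}`, where `o^*` is the coordinate vector of `o` read as a
covector, in `End(V^{⊗(i+mn)})`. -/
def augment (i m n : ℕ) (w : TSp n (i + m * n) i) :
    Matrix (Fin (i + m * n) → Fin n) (Fin (i + m * n) → Fin n) ℂ :=
  (replicateRow Unit (oPow m n) ⊗ₖ mat n _ i w).submatrix (Equiv.punitProd _).symm
    (split i m n 1)

theorem tensorPow_mul_augment_mul {w : TSp n (i + m * n) i}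
    (hw : ∀ g, tact (i + m * n) i g w = g.val.det ^ m • w)
    (g : (Matrix (Fin n) (Fin n) ℂ)ˣ) :
    tensorPow (Fin (i + m * n)) g.val * augment i m n w *
      tensorPow (Fin (i + m * n)) (g⁻¹).val = augment i m n w := by
  have hw' := congr(mat n _ i $(hw g))
  rw [mat_tact, map_smul] at hw'
  rw [augment, tensorPow_eq_submatrix_split 1 (g⁻¹).val,
    ← one_kronecker_submatrix_punitProd (tensorPow (Fin (i + m * n)) g.val),
    submatrix_mul_equiv, submatrix_mul_equiv, ← mul_kronecker_mul, ← mul_kronecker_mul,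
    Matrix.one_mul, ← replicateRow_vecMul, oPow_vecMul_tensorPow, hw', replicateRow_smul,
    smul_kronecker, kronecker_smul, smul_smul, ← mul_pow, ← det_mul, Units.inv_mul, det_one,
    one_pow, one_smul]

theorem commute_tensorPow_augment {w : TSp n (i + m * n) i}
    (hw : ∀ g, tact (i + m * n) i g w = g.val.det ^ m • w)
    (g : (Matrix (Fin n) (Fin n) ℂ)ˣ) :
    Commute (tensorPow (Fin (i + m * n)) g.val) (augment i m n w) := by
  rw [Commute, SemiconjBy]
  nth_rewrite 2 [← tensorPow_mul_augment_mul hw g]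
  rw [Matrix.mul_assoc _ (tensorPow _ _), tensorPow_inv_mul_tensorPow, Matrix.mul_one]

def idTensor (n i : ℕ) : TSp n i i := (mat n i i).symm 1

theorem tact_idTensor (g : (Matrix (Fin n) (Fin n) ℂ)ˣ) :
    tact i i g (idTensor n i) = idTensor n i := by
  apply (mat n i i).injective
  rw [mat_tact, idTensor, LinearEquiv.apply_symm_apply, Matrix.mul_one,
    tensorPow_mul_tensorPow_inv]

/-- Contracts the `i + mn` covariant slots against `Φ_1(δ) = o^{⊗m} ⊗ δ`, leaving `i` of
them. -/
def contract (i m n : ℕ) :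
    Matrix (Fin (i + m * n) → Fin n) (Fin (i + m * n) → Fin n) ℂ →ₗ[ℂ]
      TSp n (i + m * n) i :=
  (mat n _ i).symm.toLinearMap ∘ₗ
    mulRightLinearMap _ ℂ (mat n _ i (PhiSigma n i m 1 (idTensor n i)))

theorem contract_apply (Y : Matrix (Fin (i + m * n) → Fin n) (Fin (i + m * n) → Fin n) ℂ) :
    contract i m n Y = (mat n _ i).symm (Y * mat n _ i (PhiSigma n i m 1 (idTensor n i))) :=
  rfl

theorem contract_permuteFactors (π : Equiv.Perm (Fin (i + m * n))) :
    contract i m n ((1 : Matrix (Fin (i + m * n) → Fin n) _ ℂ).submatrix (· ∘ π) id) =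
      PhiSigma n i m π (idTensor n i) := by
  rw [contract_apply, LinearEquiv.symm_apply_eq]
  ext a b
  simp only [mul_apply, submatrix_apply, one_apply, id_eq, ite_mul, one_mul, zero_mul,
    sum_ite_eq, mem_univ, if_true]
  rfl

theorem contract_augment (w : TSp n (i + m * n) i) :
    contract i m n (augment i m n w) = (n.factorial : ℂ) ^ m • w := by
  rw [contract_apply, LinearEquiv.symm_apply_eq, augment, mat_PhiSigma, idTensor,
    LinearEquiv.apply_symm_apply, submatrix_mul_equiv, ← mul_kronecker_mul, Matrix.mul_one,
    replicateRow_mul_replicateCol, oPow_dotProduct_oPow, map_smul]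
  ext
  simp [mat]

end TensorCov

end

open TensorCov in
theorem det_eigenspace_eq_sum_images_general
    (n : ℕ) (i m : ℕ) :
    {w : TSp n (i + m * n) i |
        ∀ g : (Matrix (Fin n) (Fin n) ℂ)ˣ,
          tact (i + m * n) i g w = ((g : Matrix (Fin n) (Fin n) ℂ).det) ^ m • w}
      = (Submodule.span ℂ
          (⋃ σ : Equiv.Perm (Fin (i + m * n)),
            PhiSigma n i m σ ''
              {x : TSp n i i | ∀ g : (Matrix (Fin n) (Fin n) ℂ)ˣ, tact i i g x = x}) :
        Set (TSp n (i + m * n) i)) := by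
  apply Set.Subset.antisymm
  · intro w hw
    have hspan := Matrix.mem_span_permuteFactors_of_commute_tensorPow
      (Matrix.commute_tensorPow_of_forall_units (commute_tensorPow_augment hw))
    have hw' := Submodule.apply_mem_span_image_of_mem_span (contract i m n) hspan
    rw [contract_augment, ← Set.range_comp] at hw'
    refine (Submodule.smul_mem_iff _ (pow_ne_zero _ (Nat.cast_ne_zero.mpr n.factorial_ne_zero))).mp
      (Submodule.span_mono ?_ hw')
    rintro _ ⟨π, rfl⟩
    exact Set.mem_iUnion.mpr
      ⟨π, idTensor n i, tact_idTensor, (contract_permuteFactors π).symm⟩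
  · rw [setOf_tact_eq_smul]
    refine Submodule.span_le.mpr ?_
    rintro _ ⟨_, ⟨σ, rfl⟩, x, hx, rfl⟩
    simpa [tactLin_apply] using tact_PhiSigma σ hx

open TensorCov in
/-- for `m > 0`, the `det^m`-eigenspace of `V^{⊗(i+mn)} ⊗ (V*)^{⊗i}`
is the sum over all permutations `σ` of the `i+mn` tensor factors of `V` of the
images under `Φ_σ` of the space of `GL(n,ℂ)`-invariants of `V^{⊗i} ⊗ (V*)^{⊗i}`. -/
theorem det_eigenspace_eq_sum_images
    (n : ℕ) (hn : 1 ≤ n) (i m : ℕ) (hm : 0 < m) :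
    {w : TSp n (i + m * n) i |
        ∀ g : (Matrix (Fin n) (Fin n) ℂ)ˣ,
          tact (i + m * n) i g w = ((g : Matrix (Fin n) (Fin n) ℂ).det) ^ m • w}
      = (Submodule.span ℂ
          (⋃ σ : Equiv.Perm (Fin (i + m * n)),
            PhiSigma n i m σ ''
              {x : TSp n i i | ∀ g : (Matrix (Fin n) (Fin n) ℂ)ˣ, tact i i g x = x}) :
        Set (TSp n (i + m * n) i)) :=
  det_eigenspace_eq_sum_images_general n i m
end

section
/- Let V, W, X, Y, Z be finite-dimensional complex vector spaces and let α : V → W, β : V → X, γ : V → Y, δ : W → Y, ε : X → Z, φ : Y → Z be linear maps. Then the sequence 0 → V → W⊕X⊕Y → Y⊕Z → 0, with first map v ↦ (α(v), β(v), γ(v)) and second map (w,x,y) ↦ (δ(w) − y, ε(x) + φ(y)), is exact if and only if the sequence 0 → V → W⊕X → Z → 0, with first map v ↦ (α(v), β(v)) and second map (w,x) ↦ φ(δ(w)) + ε(x), is exact and γ = δ∘α. -/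
/-!
The shears `((w, x), y) ↦ (w, x, δ w - y)` and `(z, y) ↦ (y, z - φ y)` identify the first
sequence with the direct sum of the second one and `0 → Y → Y → 0`, except that the first map
acquires the extra component `δ ∘ α - γ : V → Y`. Exactness of such a sum forces that component
to vanish.
-/

/-- Exactness of a short sequence `0 → M₁ → M₂ → M₃ → 0` of `ℂ`-vector spaces. -/
def LinearMap.IsShortExactSeq {M₁ M₂ M₃ : Type*} [AddCommGroup M₁] [Module ℂ M₁]
    [AddCommGroup M₂] [Module ℂ M₂] [AddCommGroup M₃] [Module ℂ M₃]
    (f : M₁ →ₗ[ℂ] M₂) (g : M₂ →ₗ[ℂ] M₃) : Prop :=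
  Function.Injective f ∧ Function.Surjective g ∧ LinearMap.range f = LinearMap.ker g

namespace LinearMap

variable {M₁ M₂ M₃ N₁ N₂ N₃ : Type*} [AddCommGroup M₁] [Module ℂ M₁] [AddCommGroup M₂]
  [Module ℂ M₂] [AddCommGroup M₃] [Module ℂ M₃] [AddCommGroup N₁] [Module ℂ N₁]
  [AddCommGroup N₂] [Module ℂ N₂] [AddCommGroup N₃] [Module ℂ N₃]

theorem IsShortExactSeq.iff_of_ladder_linearEquiv {f₁₂ : M₁ →ₗ[ℂ] M₂} {f₂₃ : M₂ →ₗ[ℂ] M₃}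
    {g₁₂ : N₁ →ₗ[ℂ] N₂} {g₂₃ : N₂ →ₗ[ℂ] N₃} (e₁ : M₁ ≃ₗ[ℂ] N₁) (e₂ : M₂ ≃ₗ[ℂ] N₂)
    (e₃ : M₃ ≃ₗ[ℂ] N₃) (h₁₂ : g₁₂ ∘ₗ e₁ = e₂ ∘ₗ f₁₂) (h₂₃ : g₂₃ ∘ₗ e₂ = e₃ ∘ₗ f₂₃) :
    IsShortExactSeq g₁₂ g₂₃ ↔ IsShortExactSeq f₁₂ f₂₃ := by
  have h₁₂' := congrArg DFunLike.coe h₁₂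
  have h₂₃' := congrArg DFunLike.coe h₂₃
  simp only [coe_comp, LinearEquiv.coe_coe] at h₁₂' h₂₃'
  have hexact : range g₁₂ = ker g₂₃ ↔ range f₁₂ = ker f₂₃ := by
    simpa only [exact_iff, eq_comm] using Function.Exact.iff_of_ladder_linearEquiv h₁₂ h₂₃
  rw [IsShortExactSeq, IsShortExactSeq, ← EquivLike.injective_comp e₁, h₁₂',
    EquivLike.comp_injective, ← EquivLike.surjective_comp e₂, h₂₃', EquivLike.comp_surjective,
    hexact]

theorem isShortExactSeq_prod_prodMap_id_iff (f : M₁ →ₗ[ℂ] M₂) (c : M₁ →ₗ[ℂ] N₁)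
    (g : M₂ →ₗ[ℂ] M₃) :
    IsShortExactSeq (f.prod c) (g.prodMap (id : N₁ →ₗ[ℂ] N₁)) ↔ IsShortExactSeq f g ∧ c = 0 := by
  constructor
  · rintro ⟨hinj, hsurj, hexact⟩
    have hc : c = 0 := by
      ext v
      have : (f v, c v) ∈ ker (g.prodMap id) := hexact ▸ ⟨v, rfl⟩
      exact congrArg Prod.snd this
    subst hc
    refine ⟨⟨fun v w h => hinj (by simp [h]), fun m => ?_, ?_⟩, rfl⟩
    · obtain ⟨⟨m', _⟩, h⟩ := hsurj (m, 0)
      exact ⟨m', congrArg Prod.fst h⟩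
    · ext m
      simpa using SetLike.ext_iff.1 hexact (m, 0)
  · rintro ⟨⟨hinj, hsurj, hexact⟩, rfl⟩
    refine ⟨fun v w h => hinj (congrArg Prod.fst h), ?_, ?_⟩
    · rw [coe_prodMap]
      exact hsurj.prodMap Function.surjective_id
    · ext ⟨m, n⟩
      simp [← hexact, eq_comm]

end LinearMap

open LinearMap in
theorem shortExact_iff_shortExact_and_eq_general
    {V W X Y Z : Type} [AddCommGroup V] [Module ℂ V]
    [AddCommGroup W] [Module ℂ W]
    [AddCommGroup X] [Module ℂ X]
    [AddCommGroup Y] [Module ℂ Y]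
    [AddCommGroup Z] [Module ℂ Z]
    (α : V →ₗ[ℂ] W) (β : V →ₗ[ℂ] X) (γ : V →ₗ[ℂ] Y)
    (δ : W →ₗ[ℂ] Y) (ε : X →ₗ[ℂ] Z) (φ : Y →ₗ[ℂ] Z) :
    LinearMap.IsShortExactSeq
        (LinearMap.prod α (LinearMap.prod β γ))
        (LinearMap.prod
          (δ ∘ₗ LinearMap.fst ℂ W (X × Y) -
            LinearMap.snd ℂ X Y ∘ₗ LinearMap.snd ℂ W (X × Y))
          (ε ∘ₗ LinearMap.fst ℂ X Y ∘ₗ LinearMap.snd ℂ W (X × Y) +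
            φ ∘ₗ LinearMap.snd ℂ X Y ∘ₗ LinearMap.snd ℂ W (X × Y)))
      ↔
    (LinearMap.IsShortExactSeq (LinearMap.prod α β)
        (φ ∘ₗ δ ∘ₗ LinearMap.fst ℂ W X + ε ∘ₗ LinearMap.snd ℂ W X)
      ∧ γ = δ ∘ₗ α) := by
  let e₂ : ((W × X) × Y) ≃ₗ[ℂ] W × X × Y :=
    ((LinearEquiv.refl ℂ (W × X)).skewProd (LinearEquiv.neg ℂ) (δ ∘ₗ fst ℂ W X)).trans
      (LinearEquiv.prodAssoc ℂ W X Y)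
  let e₃ : (Z × Y) ≃ₗ[ℂ] Y × Z :=
    (LinearEquiv.prodComm ℂ Z Y).trans ((LinearEquiv.refl ℂ Y).skewProd (LinearEquiv.refl ℂ Z) (-φ))
  rw [IsShortExactSeq.iff_of_ladder_linearEquiv (LinearEquiv.refl ℂ V) e₂ e₃
      (f₁₂ := (α.prod β).prod (δ ∘ₗ α - γ))
      (f₂₃ := (φ ∘ₗ δ ∘ₗ fst ℂ W X + ε ∘ₗ snd ℂ W X).prodMap LinearMap.id),
    isShortExactSeq_prod_prodMap_id_iff, sub_eq_zero, eq_comm]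
  · ext <;> simp [e₂]
  · ext <;> simp [e₂, e₃]

/-- first exactness lemma. -/
theorem shortExact_iff_shortExact_and_eq
    {V W X Y Z : Type} [AddCommGroup V] [Module ℂ V] [FiniteDimensional ℂ V]
    [AddCommGroup W] [Module ℂ W] [FiniteDimensional ℂ W]
    [AddCommGroup X] [Module ℂ X] [FiniteDimensional ℂ X]
    [AddCommGroup Y] [Module ℂ Y] [FiniteDimensional ℂ Y]
    [AddCommGroup Z] [Module ℂ Z] [FiniteDimensional ℂ Z]
    (α : V →ₗ[ℂ] W) (β : V →ₗ[ℂ] X) (γ : V →ₗ[ℂ] Y)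
    (δ : W →ₗ[ℂ] Y) (ε : X →ₗ[ℂ] Z) (φ : Y →ₗ[ℂ] Z) :
    LinearMap.IsShortExactSeq
        (LinearMap.prod α (LinearMap.prod β γ))
        (LinearMap.prod
          (δ ∘ₗ LinearMap.fst ℂ W (X × Y) -
            LinearMap.snd ℂ X Y ∘ₗ LinearMap.snd ℂ W (X × Y))
          (ε ∘ₗ LinearMap.fst ℂ X Y ∘ₗ LinearMap.snd ℂ W (X × Y) +
            φ ∘ₗ LinearMap.snd ℂ X Y ∘ₗ LinearMap.snd ℂ W (X × Y)))
      ↔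
    (LinearMap.IsShortExactSeq (LinearMap.prod α β)
        (φ ∘ₗ δ ∘ₗ LinearMap.fst ℂ W X + ε ∘ₗ LinearMap.snd ℂ W X)
      ∧ γ = δ ∘ₗ α) :=
  shortExact_iff_shortExact_and_eq_general α β γ δ ε φ
end

section
/- Let U, V, W, X, Y, Z be finite-dimensional complex vector spaces and let α : U → V, β : U → W, γ : U → X, δ : V → X, ε : V → Y, φ : W → Y, ψ : W → Z, ρ : X → Z, σ : Y → Z be linear maps such that the map W⊕X → Z, (w,x) ↦ ψ(w) + ρ(x), is surjective. Then the four-term sequence 0 → U → V⊕W⊕X → X⊕Y⊕Z → Z → 0, with maps u ↦ (α(u), β(u), γ(u)), then (v,w,x) ↦ (δ(v) + x, ε(v) + φ(w), ψ(w) + ρ(x)), then (x,y,z) ↦ ρ(x) + σ(y) − z, is exact if and only if γ = −δ∘α, ψ = σ∘φ, ρ∘δ + σ∘ε = 0, and the sequence 0 → U → V⊕W → Y → 0, with maps u ↦ (α(u), β(u)) and (v,w) ↦ ε(v) + φ(w), is exact. -/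
/-!
Reading the composites off on the summands, the second one vanishes iff `ψ = σ ∘ φ` and
`ρ ∘ δ + σ ∘ ε = 0`, and the first one forces `γ = -δ ∘ α`. Granting these, the kernel of the
middle map and the image of the first map are the graph `x = -δ v` over, respectively, the kernel
of `ε + φ` and the image of `(α, β)`; and a point `(x, y, ρ x + σ y)` of the kernel of the last
map lies in the image of the middle map exactly when `y` lies in the image of `ε + φ`. The last
map is onto, since `(0, 0, -z) ↦ z`.
-/

/-- Exactness of a four-term sequence `0 → M₁ → M₂ → M₃ → M₄ → 0`. -/
def LinearMap.IsFourTermExactSeq {M₁ M₂ M₃ M₄ : Type*}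
    [AddCommGroup M₁] [Module ℂ M₁] [AddCommGroup M₂] [Module ℂ M₂]
    [AddCommGroup M₃] [Module ℂ M₃] [AddCommGroup M₄] [Module ℂ M₄]
    (f : M₁ →ₗ[ℂ] M₂) (g : M₂ →ₗ[ℂ] M₃) (k : M₃ →ₗ[ℂ] M₄) : Prop :=
  Function.Injective f ∧ LinearMap.range f = LinearMap.ker g ∧
    LinearMap.range g = LinearMap.ker k ∧ Function.Surjective k

open LinearMap

namespace FourTermSeq

variable {R : Type*} [Ring R] {U V W X Y Z : Type*}
  [AddCommGroup U] [Module R U] [AddCommGroup V] [Module R V] [AddCommGroup W] [Module R W]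
  [AddCommGroup X] [Module R X] [AddCommGroup Y] [Module R Y] [AddCommGroup Z] [Module R Z]
  (α : U →ₗ[R] V) (β : U →ₗ[R] W) (δ : V →ₗ[R] X) (ε : V →ₗ[R] Y) (φ : W →ₗ[R] Y)
  (ψ : W →ₗ[R] Z) (ρ : X →ₗ[R] Z) (σ : Y →ₗ[R] Z)

def mid : V × W × X →ₗ[R] X × Y × Z :=
  (δ ∘ₗ fst R V (W × X) + snd R W X ∘ₗ snd R V (W × X)).prod
    ((ε ∘ₗ fst R V (W × X) + φ ∘ₗ fst R W X ∘ₗ snd R V (W × X)).prod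
      (ψ ∘ₗ fst R W X ∘ₗ snd R V (W × X) + ρ ∘ₗ snd R W X ∘ₗ snd R V (W × X)))

def last : X × Y × Z →ₗ[R] Z :=
  ρ ∘ₗ fst R X (Y × Z) + σ ∘ₗ fst R Y Z ∘ₗ snd R X (Y × Z) - snd R Y Z ∘ₗ snd R X (Y × Z)

@[simp]
theorem mid_apply (v : V) (w : W) (x : X) :
    mid δ ε φ ψ ρ (v, w, x) = (δ v + x, ε v + φ w, ψ w + ρ x) := rfl

@[simp]
theorem last_apply (x : X) (y : Y) (z : Z) : last ρ σ (x, y, z) = ρ x + σ y - z := rfl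

theorem last_surjective : Function.Surjective (last ρ σ) :=
  fun z ↦ ⟨(0, 0, -z), by simp⟩

variable {δ ε φ ψ ρ σ}

theorem last_comp_mid_eq_zero_iff :
    last ρ σ ∘ₗ mid δ ε φ ψ ρ = 0 ↔ ψ = σ ∘ₗ φ ∧ ρ ∘ₗ δ + σ ∘ₗ ε = 0 := by
  constructor
  · intro h
    refine ⟨ext fun w ↦ ?_, ext fun v ↦ ?_⟩
    · exact (sub_eq_zero.1 (by simpa using congr($h (0, w, 0)))).symm
    · simpa using congr($h (v, 0, 0))
  · rintro ⟨rfl, h⟩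
    refine ext fun ⟨v, w, x⟩ ↦ ?_
    have hv : ρ (δ v) + σ (ε v) = 0 := congr($h v)
    simp only [comp_apply, mid_apply, last_apply, map_add, LinearMap.zero_apply]
    rw [← hv]
    abel

theorem eq_neg_comp_of_mid_comp_eq_zero {γ : U →ₗ[R] X}
    (h : mid δ ε φ ψ ρ ∘ₗ α.prod (β.prod γ) = 0) : γ = -(δ ∘ₗ α) :=
  ext fun u ↦ eq_neg_of_add_eq_zero_right congr(($h u).1)

theorem mem_ker_mid_iff (h : last ρ σ ∘ₗ mid δ ε φ ψ ρ = 0) (v : V) (w : W) (x : X) :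
    (v, w, x) ∈ ker (mid δ ε φ ψ ρ) ↔ x = -δ v ∧ ε v + φ w = 0 := by
  obtain ⟨rfl, hρδ⟩ := last_comp_mid_eq_zero_iff.1 h
  have hσ : ρ (δ v) = -σ (ε v) := eq_neg_of_add_eq_zero_left congr($hρδ v)
  simp only [mem_ker, mid_apply, comp_apply, Prod.mk_eq_zero, add_eq_zero_iff_eq_neg']
  constructor
  · rintro ⟨rfl, hy, -⟩
    exact ⟨rfl, hy⟩
  · rintro ⟨rfl, hy⟩
    refine ⟨rfl, hy, ?_⟩
    simp [hy, hσ]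

theorem mem_range_prod_prod_neg_comp_iff (v : V) (w : W) (x : X) :
    (v, w, x) ∈ range (α.prod (β.prod (-(δ ∘ₗ α)))) ↔ x = -δ v ∧ (v, w) ∈ range (α.prod β) := by
  simp only [mem_range, prod_apply, Function.prod, LinearMap.neg_apply, comp_apply,
    Prod.mk.injEq]
  constructor
  · rintro ⟨u, rfl, rfl, rfl⟩
    exact ⟨rfl, u, rfl, rfl⟩
  · rintro ⟨rfl, u, rfl, rfl⟩
    exact ⟨u, rfl, rfl, rfl⟩

theorem injective_prod_prod_neg_comp_iff :
    Function.Injective (α.prod (β.prod (-(δ ∘ₗ α)))) ↔ Function.Injective (α.prod β) := by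
  simp only [← ker_eq_bot, ker_prod]
  rw [← inf_assoc, inf_eq_left.2 fun u hu ↦ by simp [mem_ker.1 hu.1]]

theorem range_prod_prod_eq_ker_mid_iff (h : last ρ σ ∘ₗ mid δ ε φ ψ ρ = 0) :
    range (α.prod (β.prod (-(δ ∘ₗ α)))) = ker (mid δ ε φ ψ ρ) ↔
      range (α.prod β) = ker (ε ∘ₗ fst R V W + φ ∘ₗ snd R V W) := by
  simp only [SetLike.ext_iff, Prod.forall, mem_range_prod_prod_neg_comp_iff,
    mem_ker_mid_iff h]
  constructor
  · intro H v w
    simpa using H v w (-δ v)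
  · intro H v w x
    simp [H]

theorem range_mid_eq_ker_last_iff (h : last ρ σ ∘ₗ mid δ ε φ ψ ρ = 0) :
    range (mid δ ε φ ψ ρ) = ker (last ρ σ) ↔
      Function.Surjective (ε ∘ₗ fst R V W + φ ∘ₗ snd R V W) := by
  obtain ⟨rfl, hρδ⟩ := last_comp_mid_eq_zero_iff.1 h
  constructor
  · intro H y
    obtain ⟨⟨v, w, x⟩, hvwx⟩ := H.ge (show (0, y, σ y) ∈ ker (last ρ σ) by simp)
    exact ⟨(v, w), congr($hvwx.2.1)⟩
  · intro H
    refine le_antisymm (range_le_ker_iff.2 h) fun ⟨x, y, z⟩ hz ↦ ?_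
    obtain ⟨⟨v, w⟩, rfl⟩ := H y
    have hz : z = ρ x + σ (ε v + φ w) := (sub_eq_zero.1 hz).symm
    have hσ : ρ (δ v) = -σ (ε v) := eq_neg_of_add_eq_zero_left congr($hρδ v)
    refine ⟨(v, w, x - δ v), Prod.ext (add_sub_cancel _ _) (Prod.ext rfl ?_)⟩
    show σ (φ w) + ρ (x - δ v) = z
    rw [hz, map_sub, hσ, map_add]
    abel

end FourTermSeq

open FourTermSeq in
theorem fourTermExact_iff_general
    {U V W X Y Z : Type}
    [AddCommGroup U] [Module ℂ U]
    [AddCommGroup V] [Module ℂ V]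
    [AddCommGroup W] [Module ℂ W]
    [AddCommGroup X] [Module ℂ X]
    [AddCommGroup Y] [Module ℂ Y]
    [AddCommGroup Z] [Module ℂ Z]
    (α : U →ₗ[ℂ] V) (β : U →ₗ[ℂ] W) (γ : U →ₗ[ℂ] X)
    (δ : V →ₗ[ℂ] X) (ε : V →ₗ[ℂ] Y) (φ : W →ₗ[ℂ] Y)
    (ψ : W →ₗ[ℂ] Z) (ρ : X →ₗ[ℂ] Z) (σ : Y →ₗ[ℂ] Z) :
    LinearMap.IsFourTermExactSeq
        (LinearMap.prod α (LinearMap.prod β γ))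
        (LinearMap.prod
          (δ ∘ₗ LinearMap.fst ℂ V (W × X) +
            LinearMap.snd ℂ W X ∘ₗ LinearMap.snd ℂ V (W × X))
          (LinearMap.prod
            (ε ∘ₗ LinearMap.fst ℂ V (W × X) +
              φ ∘ₗ LinearMap.fst ℂ W X ∘ₗ LinearMap.snd ℂ V (W × X))
            (ψ ∘ₗ LinearMap.fst ℂ W X ∘ₗ LinearMap.snd ℂ V (W × X) +
              ρ ∘ₗ LinearMap.snd ℂ W X ∘ₗ LinearMap.snd ℂ V (W × X))))
        (ρ ∘ₗ LinearMap.fst ℂ X (Y × Z) +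
          σ ∘ₗ LinearMap.fst ℂ Y Z ∘ₗ LinearMap.snd ℂ X (Y × Z) -
          LinearMap.snd ℂ Y Z ∘ₗ LinearMap.snd ℂ X (Y × Z))
      ↔
    (γ = -(δ ∘ₗ α) ∧ ψ = σ ∘ₗ φ ∧ ρ ∘ₗ δ + σ ∘ₗ ε = 0 ∧
      LinearMap.IsShortExactSeq (LinearMap.prod α β)
        (ε ∘ₗ LinearMap.fst ℂ V W + φ ∘ₗ LinearMap.snd ℂ V W)) := by
  change IsFourTermExactSeq _ (mid δ ε φ ψ ρ) (last ρ σ) ↔ _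
  constructor
  · rintro ⟨hf, hfg, hgk, -⟩
    have hcomplex := range_le_ker_iff.1 hgk.le
    obtain rfl := eq_neg_comp_of_mid_comp_eq_zero α β (range_le_ker_iff.1 hfg.le)
    obtain ⟨hψ, hρδ⟩ := last_comp_mid_eq_zero_iff.1 hcomplex
    exact ⟨rfl, hψ, hρδ, (injective_prod_prod_neg_comp_iff α β).1 hf,
      (range_mid_eq_ker_last_iff hcomplex).1 hgk,
      (range_prod_prod_eq_ker_mid_iff α β hcomplex).1 hfg⟩
  · rintro ⟨rfl, hψ, hρδ, hinj, hsurj, hrange⟩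
    have hcomplex := last_comp_mid_eq_zero_iff.2 ⟨hψ, hρδ⟩
    exact ⟨(injective_prod_prod_neg_comp_iff α β).2 hinj,
      (range_prod_prod_eq_ker_mid_iff α β hcomplex).2 hrange,
      (range_mid_eq_ker_last_iff hcomplex).2 hsurj, last_surjective ρ σ⟩

/-- second exactness lemma. -/
theorem fourTermExact_iff
    {U V W X Y Z : Type}
    [AddCommGroup U] [Module ℂ U] [FiniteDimensional ℂ U]
    [AddCommGroup V] [Module ℂ V] [FiniteDimensional ℂ V]
    [AddCommGroup W] [Module ℂ W] [FiniteDimensional ℂ W]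
    [AddCommGroup X] [Module ℂ X] [FiniteDimensional ℂ X]
    [AddCommGroup Y] [Module ℂ Y] [FiniteDimensional ℂ Y]
    [AddCommGroup Z] [Module ℂ Z] [FiniteDimensional ℂ Z]
    (α : U →ₗ[ℂ] V) (β : U →ₗ[ℂ] W) (γ : U →ₗ[ℂ] X)
    (δ : V →ₗ[ℂ] X) (ε : V →ₗ[ℂ] Y) (φ : W →ₗ[ℂ] Y)
    (ψ : W →ₗ[ℂ] Z) (ρ : X →ₗ[ℂ] Z) (σ : Y →ₗ[ℂ] Z)
    (hsurj : Function.Surjective fun p : W × X => ψ p.1 + ρ p.2) :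
    LinearMap.IsFourTermExactSeq
        (LinearMap.prod α (LinearMap.prod β γ))
        (LinearMap.prod
          (δ ∘ₗ LinearMap.fst ℂ V (W × X) +
            LinearMap.snd ℂ W X ∘ₗ LinearMap.snd ℂ V (W × X))
          (LinearMap.prod
            (ε ∘ₗ LinearMap.fst ℂ V (W × X) +
              φ ∘ₗ LinearMap.fst ℂ W X ∘ₗ LinearMap.snd ℂ V (W × X))
            (ψ ∘ₗ LinearMap.fst ℂ W X ∘ₗ LinearMap.snd ℂ V (W × X) +
              ρ ∘ₗ LinearMap.snd ℂ W X ∘ₗ LinearMap.snd ℂ V (W × X))))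
        (ρ ∘ₗ LinearMap.fst ℂ X (Y × Z) +
          σ ∘ₗ LinearMap.fst ℂ Y Z ∘ₗ LinearMap.snd ℂ X (Y × Z) -
          LinearMap.snd ℂ Y Z ∘ₗ LinearMap.snd ℂ X (Y × Z))
      ↔
    (γ = -(δ ∘ₗ α) ∧ ψ = σ ∘ₗ φ ∧ ρ ∘ₗ δ + σ ∘ₗ ε = 0 ∧
      LinearMap.IsShortExactSeq (LinearMap.prod α β)
        (ε ∘ₗ LinearMap.fst ℂ V W + φ ∘ₗ LinearMap.snd ℂ V W)) :=
  fourTermExact_iff_general α β γ δ ε φ ψ ρ σ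
end
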